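/- If u →* v and u →* v^R for some word v over {a,b,ā,b̄}, then the word u·ū rewrites to the empty word ε, and hence admits a matching satisfying the crossing condition. -/

import Mathlib

/-- The four-letter alphabet `{a, b, ā, b̄}`; `A` stands for `ā` and `B` for `b̄`. -/
inductive L : Type
  | a | b | A | B
deriving DecidableEq

/-- The antiparallel letter: `a ↔ ā`, `b ↔ b̄`. -/
def bar : L → L
  | .a => .A
  | .A => .a
  | .b => .B
  | .B => .b

/-- Letterwise application of the involution `a ↔ ā`, `b ↔ b̄` to a word. -/
def barw (w : List L) : List L := w.map bar

/-- The eight rewrite rules of the Sub Rosa system: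
`ab→ba`, `bā→āb`, `āb̄→b̄ā`, `b̄a→ab̄`, `aā→ε`, `āa→ε`, `bb̄→ε`, `b̄b→ε`. -/
def Rule : List L → List L → Prop := fun x y =>
  (x = [.a, .b] ∧ y = [.b, .a]) ∨ (x = [.b, .A] ∧ y = [.A, .b]) ∨
  (x = [.A, .B] ∧ y = [.B, .A]) ∨ (x = [.B, .a] ∧ y = [.a, .B]) ∨
  (x = [.a, .A] ∧ y = []) ∨ (x = [.A, .a] ∧ y = []) ∨
  (x = [.b, .B] ∧ y = []) ∨ (x = [.B, .b] ∧ y = [])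

/-- One rewrite step: replace a factor matching the left side of a rule by its right side. -/
def Step (u v : List L) : Prop :=
  ∃ p s x y, Rule x y ∧ u = p ++ x ++ s ∧ v = p ++ y ++ s

/-- `u →* v`: the reflexive transitive closure of the rewrite step. -/
def Steps : List L → List L → Prop := Relation.ReflTransGen Step

/-- `rep w n` is the `n`-fold concatenation `w^n`. -/
def rep (w : List L) (n : ℕ) : List L := (List.replicate n w).flatten

/-- A matching on a word pairs each occurrence of a letter with an occurrence of its
antiparallel letter, bijectively (an involution without fixed points). -/
structure Matching (w : List L) where
  m : Fin w.length → Fin w.length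
  invol : ∀ i, m (m i) = i
  nofix : ∀ i, m i ≠ i
  compat : ∀ i, w.get (m i) = bar (w.get i)

/-- The 4-tuples of letters that are cyclic rotations of `(a, b, ā, b̄)`. -/
def Rot4 : L → L → L → L → Prop := fun x y z t =>
  (x = .a ∧ y = .b ∧ z = .A ∧ t = .B) ∨ (x = .b ∧ y = .A ∧ z = .B ∧ t = .a) ∨
  (x = .A ∧ y = .B ∧ z = .a ∧ t = .b) ∨ (x = .B ∧ y = .a ∧ z = .b ∧ t = .A)

/-- The crossing condition: whenever two matched pairs interleave (cross) in the cyclic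
word, the four letters read in positional order form a cyclic rotation of `a, b, ā, b̄`. -/
def CrossOK {w : List L} (M : Matching w) : Prop :=
  ∀ i j i' j' : Fin w.length, i < j → j < i' → i' < j' →
    M.m i = i' → M.m j = j' →
    Rot4 (w.get i) (w.get j) (w.get i') (w.get j')

/-- A word admits a matching satisfying the crossing condition. -/
def GoodWord (w : List L) : Prop := ∃ M : Matching w, CrossOK M

lemma bar_bar (x : L) : bar (bar x) = x := by cases x <;> rfl

lemma step_append_left (t u v : List L) (h : Step u v) : Step (t ++ u) (t ++ v) := by
  obtain ⟨p, s, x, y, hr, hu, hv⟩ := h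
  exact ⟨t ++ p, s, x, y, hr, by simp [hu], by simp [hv]⟩

lemma step_append_right (t u v : List L) (h : Step u v) : Step (u ++ t) (v ++ t) := by
  obtain ⟨p, s, x, y, hr, hu, hv⟩ := h
  exact ⟨p, s ++ t, x, y, hr, by simp [hu], by simp [hv]⟩

lemma steps_append_left (t : List L) {u v : List L} (h : Steps u v) :
    Steps (t ++ u) (t ++ v) := by
  induction h with
  | refl => exact Relation.ReflTransGen.refl
  | tail _ hs ih => exact ih.tail (step_append_left _ _ _ hs)

lemma steps_append_right (t : List L) {u v : List L} (h : Steps u v) :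
    Steps (u ++ t) (v ++ t) := by
  induction h with
  | refl => exact Relation.ReflTransGen.refl
  | tail _ hs ih => exact ih.tail (step_append_right _ _ _ hs)

lemma step_barw {u v : List L} (h : Step u v) : Step (barw u) (barw v) := by
  obtain ⟨p, s, x, y, hr, hu, hv⟩ := h
  refine ⟨barw p, barw s, barw x, barw y, ?_, by simp [hu, barw], by simp [hv, barw]⟩
  rcases hr with ⟨hx,hy⟩|⟨hx,hy⟩|⟨hx,hy⟩|⟨hx,hy⟩|⟨hx,hy⟩|⟨hx,hy⟩|⟨hx,hy⟩|⟨hx,hy⟩ <;>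
    subst hx <;> subst hy <;> simp [Rule, barw, bar]

lemma steps_barw {u v : List L} (h : Steps u v) : Steps (barw u) (barw v) := by
  induction h with
  | refl => exact Relation.ReflTransGen.refl
  | tail _ hs ih => exact ih.tail (step_barw hs)

lemma step_cancel (x : L) : Step [x, bar x] [] := by
  refine ⟨[], [], [x, bar x], [], ?_, by simp, by simp⟩
  cases x <;> simp [Rule, bar]

lemma steps_cancel_self (v : List L) : Steps (v ++ (barw v).reverse) [] := by
  induction v with
  | nil => exact Relation.ReflTransGen.refl
  | cons x t ih =>
    have h1 : Steps (x :: (t ++ (barw t).reverse ++ [bar x])) (x :: ([] ++ [bar x])) := by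
      have := steps_append_right [bar x] ih
      have := steps_append_left [x] this
      simpa using this
    have h2 : Steps [x, bar x] [] := Relation.ReflTransGen.single (step_cancel x)
    have : (x :: t) ++ (barw (x :: t)).reverse
        = x :: (t ++ (barw t).reverse ++ [bar x]) := by simp [barw]
    rw [this]
    exact h1.trans (by simpa [Steps] using h2)

lemma steps_to_nil (u v : List L) (h1 : Steps u v) (h2 : Steps u v.reverse) :
    Steps (u ++ barw u) [] := by
  have s1 : Steps (u ++ barw u) (v ++ barw u) := steps_append_right _ h1
  have s2 : Steps (v ++ barw u) (v ++ barw v.reverse) := steps_append_left _ (steps_barw h2)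
  have e : barw v.reverse = (barw v).reverse := by simp [barw]
  exact (s1.trans s2).trans (by rw [e]; exact steps_cancel_self v)

-- part 2: getElem helper lemmas (appended to s1 content for testing)
section Get3
variable (p s : List L) (c d : L)

lemma len3 : (p ++ [c, d] ++ s).length = p.length + s.length + 2 := by
  simp [List.length_append]; omega

lemma get3_left {t : ℕ} (ht : t < p.length) (h : t < (p ++ [c,d] ++ s).length) :
    (p ++ [c,d] ++ s).get ⟨t, h⟩ = p.get ⟨t, ht⟩ := by
  simp only [List.get_eq_getElem]
  rw [List.getElem_append_left (by simp; omega), List.getElem_append_left ht]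

lemma get3_k (h : p.length < (p ++ [c,d] ++ s).length) :
    (p ++ [c,d] ++ s).get ⟨p.length, h⟩ = c := by
  simp only [List.get_eq_getElem]
  rw [List.getElem_append_left (by simp), List.getElem_append_right (by omega)]
  simp

lemma get3_k1 (h : p.length + 1 < (p ++ [c,d] ++ s).length) :
    (p ++ [c,d] ++ s).get ⟨p.length + 1, h⟩ = d := by
  simp only [List.get_eq_getElem]
  rw [List.getElem_append_left (by simp), List.getElem_append_right (by omega)]
  simp

lemma get3_right {t : ℕ} (ht : p.length + 2 ≤ t) (h : t < (p ++ [c,d] ++ s).length)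
    (hs : t - p.length - 2 < s.length) :
    (p ++ [c,d] ++ s).get ⟨t, h⟩ = s.get ⟨t - p.length - 2, hs⟩ := by
  simp only [List.get_eq_getElem]
  rw [List.getElem_append_right (by simp; omega)]
  congr 1
  simp; omega

lemma get2_left {t : ℕ} (ht : t < p.length) (h : t < (p ++ s).length) :
    (p ++ s).get ⟨t, h⟩ = p.get ⟨t, ht⟩ := by
  simp only [List.get_eq_getElem]
  rw [List.getElem_append_left ht]

lemma get2_right {t : ℕ} (ht : p.length ≤ t) (h : t < (p ++ s).length)
    (hs : t - p.length < s.length) :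
    (p ++ s).get ⟨t, h⟩ = s.get ⟨t - p.length, hs⟩ := by
  simp only [List.get_eq_getElem]
  rw [List.getElem_append_right ht]

end Get3

-- part 3: index functions and matching transfer lemmas

def liftF (k t : ℕ) : ℕ := if t < k then t else t + 2
def dropF (k t : ℕ) : ℕ := if t < k then t else t - 2
def swF (k t : ℕ) : ℕ := if t = k then k + 1 else if t = k + 1 then k else t

lemma getD_get (l : List L) (i : Fin l.length) : l.get i = l.getD i.val L.a := by
  rw [List.getD_eq_getElem _ _ i.isLt, List.get_eq_getElem]

lemma getD3_left (p s : List L) (c d : L) {t : ℕ} (ht : t < p.length) :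
    (p ++ [c,d] ++ s).getD t L.a = p.getD t L.a := by
  have h : t < (p ++ [c,d] ++ s).length := by rw [len3]; omega
  rw [List.getD_eq_getElem _ _ h, List.getD_eq_getElem _ _ ht]
  simpa using get3_left p s c d ht h

lemma getD3_k (p s : List L) (c d : L) :
    (p ++ [c,d] ++ s).getD p.length L.a = c := by
  have h : p.length < (p ++ [c,d] ++ s).length := by rw [len3]; omega
  rw [List.getD_eq_getElem _ _ h]
  simpa using get3_k p s c d h

lemma getD3_k1 (p s : List L) (c d : L) :
    (p ++ [c,d] ++ s).getD (p.length + 1) L.a = d := by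
  have h : p.length + 1 < (p ++ [c,d] ++ s).length := by rw [len3]; omega
  rw [List.getD_eq_getElem _ _ h]
  simpa using get3_k1 p s c d h

lemma getD3_right (p s : List L) (c d : L) {t : ℕ} (ht : p.length + 2 ≤ t)
    (hs : t - p.length - 2 < s.length) :
    (p ++ [c,d] ++ s).getD t L.a = s.getD (t - p.length - 2) L.a := by
  have h : t < (p ++ [c,d] ++ s).length := by rw [len3]; omega
  rw [List.getD_eq_getElem _ _ h, List.getD_eq_getElem _ _ hs]
  simpa using get3_right p s c d ht h hs

lemma getD2_left (p s : List L) {t : ℕ} (ht : t < p.length) :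
    (p ++ s).getD t L.a = p.getD t L.a := by
  have h : t < (p ++ s).length := by simp; omega
  rw [List.getD_eq_getElem _ _ h, List.getD_eq_getElem _ _ ht]
  simpa using get2_left p s ht h

lemma getD2_right (p s : List L) {t : ℕ} (ht : p.length ≤ t)
    (hs : t - p.length < s.length) :
    (p ++ s).getD t L.a = s.getD (t - p.length) L.a := by
  have h : t < (p ++ s).length := by simp; omega
  rw [List.getD_eq_getElem _ _ h, List.getD_eq_getElem _ _ hs]
  simpa using get2_right p s ht h hs

/-- values of the long word agree with those of the short word via `liftF`. -/
lemma getD_lift (p s : List L) (c d : L) {t : ℕ} (ht : t < (p ++ s).length) :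
    (p ++ [c,d] ++ s).getD (liftF p.length t) L.a = (p ++ s).getD t L.a := by
  have hlen : (p ++ s).length = p.length + s.length := by simp
  unfold liftF
  split_ifs with h
  · rw [getD3_left p s c d h, getD2_left p s h]
  · push_neg at h
    rw [getD3_right p s c d (by omega) (by omega), getD2_right p s h (by omega)]
    congr 1
    omega

/-- values of the `[c,d]` word agree with those of the `[d,c]` word via `swF`. -/
lemma getD_sw (p s : List L) (c d : L) {t : ℕ} (ht : t < (p ++ [d,c] ++ s).length) :
    (p ++ [c,d] ++ s).getD (swF p.length t) L.a = (p ++ [d,c] ++ s).getD t L.a := by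
  have hl := len3 p s d c
  unfold swF
  split_ifs with h1 h2
  · rw [h1, getD3_k1, getD3_k]
  · rw [h2, getD3_k, getD3_k1]
  · rcases lt_trichotomy t p.length with h | h | h
    · rw [getD3_left p s c d h, getD3_left p s d c h]
    · omega
    · rw [getD3_right p s c d (by omega) (by omega), getD3_right p s d c (by omega) (by omega)]

-- part 4: arithmetic lemmas on index maps

lemma swF_swF (k t : ℕ) : swF k (swF k t) = t := by unfold swF; split_ifs <;> omega

lemma swF_bd {k t n : ℕ} (hk : k + 1 < n) (ht : t < n) : swF k t < n := by
  unfold swF; split_ifs <;> omega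

lemma swF_mono {k a b : ℕ} (hab : a < b) (hc : a ≠ k ∨ b ≠ k + 1) :
    swF k a < swF k b := by
  unfold swF; rcases hc with h | h <;> split_ifs <;> omega

lemma dropF_liftF (k t : ℕ) : dropF k (liftF k t) = t := by
  unfold liftF dropF; split_ifs <;> omega

lemma liftF_dropF {k t : ℕ} (h1 : t ≠ k) (h2 : t ≠ k + 1) :
    liftF k (dropF k t) = t := by
  unfold liftF dropF; split_ifs <;> omega

lemma liftF_bd {k t n : ℕ} (h : t < n) : liftF k t < n + 2 := by
  unfold liftF; split_ifs <;> omega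

lemma liftF_ne {k t : ℕ} : liftF k t ≠ k ∧ liftF k t ≠ k + 1 := by
  unfold liftF; split_ifs <;> omega

lemma dropF_bd {k t n : ℕ} (hk : k ≤ n) (h : t < n + 2) (h1 : t ≠ k) (h2 : t ≠ k + 1) :
    dropF k t < n := by
  unfold dropF; split_ifs <;> omega

lemma dropF_mono {k a b : ℕ} (hab : a < b) (ha1 : a ≠ k) (ha2 : a ≠ k + 1)
    (hb1 : b ≠ k) (hb2 : b ≠ k + 1) : dropF k a < dropF k b := by
  unfold dropF; split_ifs <;> omega

-- value-level matching function
def mval {w : List L} (M : Matching w) (t : ℕ) : ℕ :=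
  if h : t < w.length then (M.m ⟨t, h⟩).val else t

lemma mval_eq {w : List L} (M : Matching w) {t : ℕ} (h : t < w.length) :
    mval M t = (M.m ⟨t, h⟩).val := by unfold mval; rw [dif_pos h]

lemma mval_bd {w : List L} (M : Matching w) {t : ℕ} (h : t < w.length) :
    mval M t < w.length := by rw [mval_eq M h]; exact (M.m ⟨t, h⟩).isLt

lemma mval_mval {w : List L} (M : Matching w) {t : ℕ} (h : t < w.length) :
    mval M (mval M t) = t := by
  rw [mval_eq M h, mval_eq M ((M.m ⟨t, h⟩).isLt)]
  simp only [Fin.eta]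
  exact congrArg Fin.val (M.invol ⟨t, h⟩)

lemma mval_ne {w : List L} (M : Matching w) {t : ℕ} (h : t < w.length) :
    mval M t ≠ t := by
  rw [mval_eq M h]
  intro he
  exact M.nofix ⟨t, h⟩ (Fin.ext he)

lemma mval_compat {w : List L} (M : Matching w) {t : ℕ} (h : t < w.length) :
    w.getD (mval M t) L.a = bar (w.getD t L.a) := by
  rw [mval_eq M h]
  have := M.compat ⟨t, h⟩
  rwa [getD_get, getD_get] at this

-- part 5: cancellation preserves GoodWord (backwards)

lemma good_cancel (c : L) (p s : List L) (hG : GoodWord (p ++ s)) :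
    GoodWord (p ++ [c, bar c] ++ s) := by
  classical
  obtain ⟨M, hM⟩ := hG
  set w' := p ++ [c, bar c] ++ s with hw'
  set k := p.length with hk
  set n := (p ++ s).length with hn
  have hkn : k ≤ n := by rw [hn, hk]; simp
  have hlen : w'.length = n + 2 := by rw [hw', len3, hn]; simp
  set f : ℕ → ℕ := fun t => if t = k then k + 1 else if t = k + 1 then k
    else liftF k (mval M (dropF k t)) with hf
  have f_k : f k = k + 1 := by rw [hf]; simp
  have f_k1 : f (k + 1) = k := by rw [hf]; simp
  have f_other : ∀ t, t ≠ k → t ≠ k + 1 → f t = liftF k (mval M (dropF k t)) := by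
    intro t h1 h2; rw [hf]; simp [h1, h2]
  have f_bd : ∀ t, t < n + 2 → f t < n + 2 := by
    intro t h
    by_cases h1 : t = k
    · rw [h1, f_k]; omega
    by_cases h2 : t = k + 1
    · rw [h2, f_k1]; omega
    rw [f_other t h1 h2]
    exact liftF_bd (mval_bd M (dropF_bd hkn h h1 h2))
  have f_f : ∀ t, t < n + 2 → f (f t) = t := by
    intro t h
    by_cases h1 : t = k
    · rw [h1, f_k, f_k1]
    by_cases h2 : t = k + 1
    · rw [h2, f_k1, f_k]
    rw [f_other t h1 h2]
    have hd : dropF k t < n := dropF_bd hkn h h1 h2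
    have hm : mval M (dropF k t) < n := mval_bd M hd
    obtain ⟨e1, e2⟩ := liftF_ne (k := k) (t := mval M (dropF k t))
    rw [f_other _ e1 e2, dropF_liftF, mval_mval M hd, liftF_dropF h1 h2]
  have f_ne : ∀ t, t < n + 2 → f t ≠ t := by
    intro t h he
    by_cases h1 : t = k
    · rw [h1, f_k] at he; omega
    by_cases h2 : t = k + 1
    · rw [h2, f_k1] at he; omega
    rw [f_other t h1 h2] at he
    have hd : dropF k t < n := dropF_bd hkn h h1 h2
    have := congrArg (dropF k) he
    rw [dropF_liftF] at this
    exact mval_ne M hd this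
  -- letter computations
  have hG'k : w'.getD k L.a = c := by rw [hw', hk]; exact getD3_k p s c (bar c)
  have hG'k1 : w'.getD (k + 1) L.a = bar c := by rw [hw', hk]; exact getD3_k1 p s c (bar c)
  have hGlift : ∀ t, t < n → w'.getD (liftF k t) L.a = (p ++ s).getD t L.a := by
    intro t h
    rw [hw', hk]
    exact getD_lift p s c (bar c) (by rw [← hn]; exact h)
  refine ⟨⟨fun i => ⟨f i.val, lt_of_lt_of_eq (f_bd i.val (hlen ▸ i.isLt)) hlen.symm⟩, ?_, ?_, ?_⟩, ?_⟩
  · intro i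
    apply Fin.ext
    exact f_f i.val (hlen ▸ i.isLt)
  · intro i he
    exact f_ne i.val (hlen ▸ i.isLt) (congrArg Fin.val he)
  · -- compat
    intro i
    have hi : i.val < n + 2 := hlen ▸ i.isLt
    rw [getD_get, getD_get]
    show w'.getD (f i.val) L.a = bar (w'.getD i.val L.a)
    by_cases h1 : i.val = k
    · rw [h1, f_k, hG'k1, hG'k]
    by_cases h2 : i.val = k + 1
    · rw [h2, f_k1, hG'k, hG'k1, bar_bar]
    have hd : dropF k i.val < n := dropF_bd hkn hi h1 h2
    rw [f_other _ h1 h2, hGlift _ (mval_bd M hd), mval_compat M hd]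
    congr 1
    rw [← hGlift _ hd, liftF_dropF h1 h2]
  · -- crossing condition
    intro i j i' j' hij hji' hi'j' hmi hmj
    have hi : i.val < n + 2 := hlen ▸ i.isLt
    have hj : j.val < n + 2 := hlen ▸ j.isLt
    have hvi : f i.val = i'.val := congrArg Fin.val hmi
    have hvj : f j.val = j'.val := congrArg Fin.val hmj
    have hijv : i.val < j.val := Fin.lt_def.mp hij
    have hji'v : j.val < i'.val := Fin.lt_def.mp hji'
    have hi'j'v : i'.val < j'.val := Fin.lt_def.mp hi'j'
    have h1 : i.val ≠ k := by intro h; rw [h, f_k] at hvi; omega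
    have h2 : i.val ≠ k + 1 := by intro h; rw [h, f_k1] at hvi; omega
    have h3 : j.val ≠ k := by intro h; rw [h, f_k] at hvj; omega
    have h4 : j.val ≠ k + 1 := by intro h; rw [h, f_k1] at hvj; omega
    rw [f_other _ h1 h2] at hvi
    rw [f_other _ h3 h4] at hvj
    have h5 : i'.val ≠ k ∧ i'.val ≠ k + 1 := hvi ▸ liftF_ne
    have h6 : j'.val ≠ k ∧ j'.val ≠ k + 1 := hvj ▸ liftF_ne
    have di : dropF k i.val < n := dropF_bd hkn hi h1 h2
    have dj : dropF k j.val < n := dropF_bd hkn hj h3 h4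
    have di' : dropF k i'.val < n := dropF_bd hkn (hlen ▸ i'.isLt) h5.1 h5.2
    have dj' : dropF k j'.val < n := dropF_bd hkn (hlen ▸ j'.isLt) h6.1 h6.2
    have dmi : mval M (dropF k i.val) = dropF k i'.val := by
      have := congrArg (dropF k) hvi; rwa [dropF_liftF] at this
    have dmj : mval M (dropF k j.val) = dropF k j'.val := by
      have := congrArg (dropF k) hvj; rwa [dropF_liftF] at this
    have key := hM ⟨dropF k i.val, di⟩ ⟨dropF k j.val, dj⟩ ⟨dropF k i'.val, di'⟩
      ⟨dropF k j'.val, dj'⟩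
      (Fin.mk_lt_mk.mpr (dropF_mono hijv h1 h2 h3 h4))
      (Fin.mk_lt_mk.mpr (dropF_mono hji'v h3 h4 h5.1 h5.2))
      (Fin.mk_lt_mk.mpr (dropF_mono hi'j'v h5.1 h5.2 h6.1 h6.2))
      (Fin.ext (by rw [← mval_eq M di]; exact dmi))
      (Fin.ext (by rw [← mval_eq M dj]; exact dmj))
    rw [getD_get, getD_get, getD_get, getD_get] at key
    have key' : Rot4 ((p ++ s).getD (dropF k i.val) L.a) ((p ++ s).getD (dropF k j.val) L.a)
        ((p ++ s).getD (dropF k i'.val) L.a) ((p ++ s).getD (dropF k j'.val) L.a) := key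
    rw [← hGlift _ di, ← hGlift _ dj, ← hGlift _ di', ← hGlift _ dj',
      liftF_dropF h1 h2, liftF_dropF h3 h4, liftF_dropF h5.1 h5.2,
      liftF_dropF h6.1 h6.2] at key'
    rw [getD_get, getD_get, getD_get, getD_get]
    exact key'

-- part 6: commutation preserves GoodWord (backwards)

lemma good_swap (p s : List L) (c d : L)
    (r1 : Rot4 c d (bar c) (bar d)) (r2 : Rot4 (bar d) c d (bar c))
    (r3 : Rot4 (bar c) (bar d) c d)
    (hG : GoodWord (p ++ [d, c] ++ s)) : GoodWord (p ++ [c, d] ++ s) := by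
  classical
  set w := p ++ [d, c] ++ s with hw
  set w' := p ++ [c, d] ++ s with hw'
  obtain ⟨M, hM⟩ := hG
  set k := p.length with hk
  set n := w.length with hn
  have hkn : k + 1 < n := by rw [hn, hw, len3]; omega
  have hlen : w'.length = n := by rw [hw', hn, hw, len3, len3]
  have sw_bd : ∀ t, t < n → swF k t < n := fun t h => swF_bd hkn h
  set f : ℕ → ℕ := fun t => swF k (mval M (swF k t)) with hf
  have f_bd : ∀ t, t < n → f t < n := by
    intro t h; rw [hf]
    exact sw_bd _ (mval_bd M (sw_bd _ h))
  have f_f : ∀ t, t < n → f (f t) = t := by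
    intro t h; rw [hf]
    simp only
    rw [swF_swF, mval_mval M (sw_bd _ h), swF_swF]
  have f_ne : ∀ t, t < n → f t ≠ t := by
    intro t h he
    rw [hf] at he
    simp only at he
    have := congrArg (swF k) he
    rw [swF_swF] at this
    exact mval_ne M (sw_bd _ h) this
  -- letters
  have hGk : w.getD k L.a = d := by rw [hw, hk]; exact getD3_k p s d c
  have hGk1 : w.getD (k + 1) L.a = c := by rw [hw, hk]; exact getD3_k1 p s d c
  have hG'k : w'.getD k L.a = c := by rw [hw', hk]; exact getD3_k p s c d
  have hG'k1 : w'.getD (k + 1) L.a = d := by rw [hw', hk]; exact getD3_k1 p s c d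
  have hGsw : ∀ t, t < n → w'.getD (swF k t) L.a = w.getD t L.a := by
    intro t h
    rw [hw', hw, hk]
    exact getD_sw p s c d (by rw [← hn]; exact h)
  have hswk : swF k k = k + 1 := by unfold swF; simp
  have hswk1 : swF k (k + 1) = k := by unfold swF; split_ifs <;> omega
  have hG'other : ∀ t, t < n → t ≠ k → t ≠ k + 1 → w'.getD t L.a = w.getD t L.a := by
    intro t h h1 h2
    have hsw : swF k t = t := by unfold swF; split_ifs <;> omega
    rw [← hGsw _ h, hsw]
  refine ⟨⟨fun i => ⟨f i.val, lt_of_lt_of_eq (f_bd i.val (hlen ▸ i.isLt)) hlen.symm⟩, ?_, ?_, ?_⟩, ?_⟩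
  · intro i
    apply Fin.ext
    exact f_f i.val (hlen ▸ i.isLt)
  · intro i he
    exact f_ne i.val (hlen ▸ i.isLt) (congrArg Fin.val he)
  · -- compat
    intro i
    have hi : i.val < n := hlen ▸ i.isLt
    rw [getD_get, getD_get]
    show w'.getD (f i.val) L.a = bar (w'.getD i.val L.a)
    rw [hf]
    simp only
    rw [hGsw _ (mval_bd M (sw_bd _ hi)), mval_compat M (sw_bd _ hi)]
    congr 1
    rw [← hGsw _ (sw_bd _ hi), swF_swF]
  · -- crossing condition
    intro i j i' j' hij hji' hi'j' hmi hmj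
    have hiv : i.val < n := hlen ▸ i.isLt
    have hjv : j.val < n := hlen ▸ j.isLt
    have hi'v : i'.val < n := hlen ▸ i'.isLt
    have hj'v : j'.val < n := hlen ▸ j'.isLt
    have hvi : f i.val = i'.val := congrArg Fin.val hmi
    have hvj : f j.val = j'.val := congrArg Fin.val hmj
    rw [hf] at hvi hvj
    simp only at hvi hvj
    have hmi' : mval M (swF k i.val) = swF k i'.val := by
      have := congrArg (swF k) hvi; rwa [swF_swF] at this
    have hmj' : mval M (swF k j.val) = swF k j'.val := by
      have := congrArg (swF k) hvj; rwa [swF_swF] at this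
    have hijv : i.val < j.val := Fin.lt_def.mp hij
    have hji'v : j.val < i'.val := Fin.lt_def.mp hji'
    have hi'j'v : i'.val < j'.val := Fin.lt_def.mp hi'j'
    rw [getD_get, getD_get, getD_get, getD_get]
    by_cases c1 : i.val = k ∧ j.val = k + 1
    · obtain ⟨e1, e2⟩ := c1
      have hswi' : swF k i'.val = i'.val := by unfold swF; split_ifs <;> omega
      have hswj' : swF k j'.val = j'.val := by unfold swF; split_ifs <;> omega
      rw [e1, hswk, hswi'] at hmi'
      rw [e2, hswk1, hswj'] at hmj'
      have g1 : w'.getD i'.val L.a = bar c := by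
        rw [hG'other _ hi'v (by omega) (by omega), ← hmi', mval_compat M (by omega), hGk1]
      have g2 : w'.getD j'.val L.a = bar d := by
        rw [hG'other _ hj'v (by omega) (by omega), ← hmj', mval_compat M (by omega), hGk]
      rw [e1, e2, hG'k, hG'k1, g1, g2]
      exact r1
    by_cases c2 : j.val = k ∧ i'.val = k + 1
    · obtain ⟨e1, e2⟩ := c2
      have hswi : swF k i.val = i.val := by unfold swF; split_ifs <;> omega
      have hswj' : swF k j'.val = j'.val := by unfold swF; split_ifs <;> omega
      rw [hswi, e2, hswk1] at hmi'
      rw [e1, hswk, hswj'] at hmj'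
      have g1 : w'.getD i.val L.a = bar d := by
        have hc := mval_compat M (t := i.val) (by rw [← hn]; omega)
        rw [hmi', hGk] at hc
        have hc2 := congrArg bar hc
        rw [bar_bar] at hc2
        rw [hG'other _ hiv (by omega) (by omega), ← hc2]
      have g2 : w'.getD j'.val L.a = bar c := by
        have hc := mval_compat M (t := k + 1) (by rw [← hn]; omega)
        rw [hmj', hGk1] at hc
        rw [hG'other _ hj'v (by omega) (by omega), hc]
      rw [e1, e2, hG'k, hG'k1, g1, g2]
      exact r2
    by_cases c3 : i'.val = k ∧ j'.val = k + 1
    · obtain ⟨e1, e2⟩ := c3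
      have hswi : swF k i.val = i.val := by unfold swF; split_ifs <;> omega
      have hswj : swF k j.val = j.val := by unfold swF; split_ifs <;> omega
      rw [hswi, e1, hswk] at hmi'
      rw [hswj, e2, hswk1] at hmj'
      have g1 : w'.getD i.val L.a = bar c := by
        have hc := mval_compat M (t := i.val) (by rw [← hn]; omega)
        rw [hmi', hGk1] at hc
        have hc2 := congrArg bar hc
        rw [bar_bar] at hc2
        rw [hG'other _ hiv (by omega) (by omega), ← hc2]
      have g2 : w'.getD j.val L.a = bar d := by
        have hc := mval_compat M (t := j.val) (by rw [← hn]; omega)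
        rw [hmj', hGk] at hc
        have hc2 := congrArg bar hc
        rw [bar_bar] at hc2
        rw [hG'other _ hjv (by omega) (by omega), ← hc2]
      rw [e1, e2, hG'k, hG'k1, g1, g2]
      exact r3
    · -- generic case: the swap does not touch a crossing pattern
      have o1 : swF k i.val < swF k j.val := by
        apply swF_mono hijv
        by_cases h : i.val = k
        · exact Or.inr fun h2 => c1 ⟨h, h2⟩
        · exact Or.inl h
      have o2 : swF k j.val < swF k i'.val := by
        apply swF_mono hji'v
        by_cases h : j.val = k
        · exact Or.inr fun h2 => c2 ⟨h, h2⟩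
        · exact Or.inl h
      have o3 : swF k i'.val < swF k j'.val := by
        apply swF_mono hi'j'v
        by_cases h : i'.val = k
        · exact Or.inr fun h2 => c3 ⟨h, h2⟩
        · exact Or.inl h
      have key := hM ⟨swF k i.val, sw_bd _ hiv⟩ ⟨swF k j.val, sw_bd _ hjv⟩
        ⟨swF k i'.val, sw_bd _ hi'v⟩ ⟨swF k j'.val, sw_bd _ hj'v⟩
        (Fin.mk_lt_mk.mpr o1) (Fin.mk_lt_mk.mpr o2) (Fin.mk_lt_mk.mpr o3)
        (Fin.ext (by rw [← mval_eq M (sw_bd _ hiv)]; exact hmi'))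
        (Fin.ext (by rw [← mval_eq M (sw_bd _ hjv)]; exact hmj'))
      rw [getD_get, getD_get, getD_get, getD_get] at key
      have key' : Rot4 (w.getD (swF k i.val) L.a) (w.getD (swF k j.val) L.a)
          (w.getD (swF k i'.val) L.a) (w.getD (swF k j'.val) L.a) := key
      rw [← hGsw _ (sw_bd _ hiv), ← hGsw _ (sw_bd _ hjv), ← hGsw _ (sw_bd _ hi'v),
        ← hGsw _ (sw_bd _ hj'v), swF_swF, swF_swF, swF_swF, swF_swF] at key'
      exact key'

lemma good_nil : GoodWord [] := by
  refine ⟨⟨fun i => i.elim0, fun i => i.elim0, fun i => i.elim0, fun i => i.elim0⟩, ?_⟩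
  intro i
  exact i.elim0

lemma good_of_step {u v : List L} (h : Step u v) (hv : GoodWord v) : GoodWord u := by
  obtain ⟨p, s, x, y, hr, hu, hveq⟩ := h
  subst hu; subst hveq
  rcases hr with ⟨hx, hy⟩ | ⟨hx, hy⟩ | ⟨hx, hy⟩ | ⟨hx, hy⟩ |
    ⟨hx, hy⟩ | ⟨hx, hy⟩ | ⟨hx, hy⟩ | ⟨hx, hy⟩ <;> subst hx <;> subst hy
  · exact good_swap p s L.a L.b (by simp [Rot4, bar]) (by simp [Rot4, bar])
      (by simp [Rot4, bar]) hv
  · exact good_swap p s L.b L.A (by simp [Rot4, bar]) (by simp [Rot4, bar])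
      (by simp [Rot4, bar]) hv
  · exact good_swap p s L.A L.B (by simp [Rot4, bar]) (by simp [Rot4, bar])
      (by simp [Rot4, bar]) hv
  · exact good_swap p s L.B L.a (by simp [Rot4, bar]) (by simp [Rot4, bar])
      (by simp [Rot4, bar]) hv
  · exact good_cancel L.a p s (by simpa using hv)
  · exact good_cancel L.A p s (by simpa using hv)
  · exact good_cancel L.b p s (by simpa using hv)
  · exact good_cancel L.B p s (by simpa using hv)

lemma good_of_steps {w : List L} (h : Steps w []) : GoodWord w := by
  induction h using Relation.ReflTransGen.head_induction_on with
  | refl => exact good_nil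
  | head hstep _ ih => exact good_of_step hstep ih

/-- If `u →* v` and `u →* v^R`, then `u·ū` rewrites to the empty word and hence admits
a matching satisfying the crossing condition. -/
theorem subrosa_double_word (u v : List L) (h1 : Steps u v) (h2 : Steps u v.reverse) :
    Steps (u ++ barw u) [] ∧ GoodWord (u ++ barw u) := by
  have hs := steps_to_nil u v h1 h2
  exact ⟨hs, good_of_steps hs⟩
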